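/- Let H and B be symmetric positive definite real n×n matrices, θ₀, θ* ∈ ℝⁿ, and α > 0 with 2α·λ_max(H^{1/2}B⁻¹H^{1/2}) < 1. Set Δ₀ = θ₀−θ*, h(θ₀) = ½Δ₀ᵀHΔ₀, M = I − αB⁻¹H, and for k ≥ 0 let ē_k = (1/(k+1))·Σ_{i=0}^{k} M^i Δ₀. Then ½·ē_kᵀ H ē_k ≤ min{ (1/(2(k+1)²α²))·‖H^{−1/2}BΔ₀‖², (1/(2(k+1)α))·‖B^{1/2}Δ₀‖², h(θ₀) }. -/

import Mathlib

open Matrix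

/-- The square root of a positive semi-definite matrix, with its Mathlib (Dec 2024) definition. -/
noncomputable def Matrix.PosSemidef.sqrt {n : Type*} [Fintype n] [DecidableEq n]
    {A : Matrix n n ℝ} (hA : A.PosSemidef) : Matrix n n ℝ :=
  (hA.1.eigenvectorUnitary : Matrix n n ℝ) * diagonal ((√·) ∘ hA.1.eigenvalues) *
    (star (hA.1.eigenvectorUnitary : Matrix n n ℝ))

/-!
Put `S = H^{1/2}` and `T = S B⁻¹ S`. Then `S M = (1 - α T) S`, hence `S ē_k = F(T) S Δ₀` for the
polynomial `F(x) = (k+1)⁻¹ ∑_{i ≤ k} (1 - α x)^i`. Each quadratic form in the statement is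
`u ⬝ g(T) u` with `u = S Δ₀` and `g` one of `F²`, `x⁻²`, `x⁻¹`, `1`, so by monotonicity of the
functional calculus everything reduces to the scalar bounds `0 ≤ F(x) ≤ min 1 ((k+1) α x)⁻¹` for
`x` in the spectrum of `T`, where `0 < α x ≤ 1` by the step-size condition.
-/

open Finset
open scoped MatrixOrder

lemma sq_average_geom_sum_le (k : ℕ) {c : ℝ} (hc0 : 0 < c) (hc1 : c ≤ 1) :
    let s := 1 / ((k : ℝ) + 1) * ∑ i ∈ range (k + 1), (1 - c) ^ i
    s ^ 2 ≤ (((k : ℝ) + 1) * c)⁻¹ ^ 2 ∧ s ^ 2 ≤ (((k : ℝ) + 1) * c)⁻¹ ∧ s ^ 2 ≤ 1 := by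
  intro s
  have hsum_card : ∑ i ∈ range (k + 1), (1 - c) ^ i ≤ (k : ℝ) + 1 := by
    simpa using Finset.sum_le_card_nsmul (range (k + 1)) _ 1 fun i _ =>
      pow_le_one₀ (sub_nonneg.mpr hc1) (sub_le_self 1 hc0.le)
  have hsum_inv : ∑ i ∈ range (k + 1), (1 - c) ^ i ≤ c⁻¹ := by
    simpa [← range_eq_Ico] using
      geom_sum_Ico_le_of_lt_one (m := 0) (n := k + 1) (sub_nonneg.mpr hc1) (sub_lt_self 1 hc0)
  have hs0 : 0 ≤ s := by positivity
  have hs1 : s ≤ 1 := by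
    change 1 / ((k : ℝ) + 1) * _ ≤ 1
    rwa [one_div, inv_mul_le_one₀ (by positivity)]
  have hsc : s ≤ (((k : ℝ) + 1) * c)⁻¹ := by
    change 1 / ((k : ℝ) + 1) * _ ≤ _
    rw [one_div, mul_inv]
    exact mul_le_mul_of_nonneg_left hsum_inv (by positivity)
  refine ⟨pow_le_pow_left₀ hs0 hsc 2, ?_, pow_le_one₀ hs0 hs1⟩
  calc s ^ 2 = s * s := sq s
    _ ≤ 1 * (((k : ℝ) + 1) * c)⁻¹ := mul_le_mul hs1 hsc hs0 zero_le_one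
    _ = (((k : ℝ) + 1) * c)⁻¹ := one_mul _

lemma SemiconjBy.sum_pow_right {R : Type*} [Semiring R] {a x y : R} (h : SemiconjBy a x y)
    (s : Finset ℕ) : SemiconjBy a (∑ i ∈ s, x ^ i) (∑ i ∈ s, y ^ i) := by
  simp only [SemiconjBy, Finset.mul_sum, Finset.sum_mul]
  exact Finset.sum_congr rfl fun i _ => (h.pow_right i).eq

lemma semiconjBy_one_sub_smul {K R : Type*} [CommSemiring K] [Ring R] [Algebra K R]
    (s c : R) (α : K) : SemiconjBy s (1 - α • (c * (s * s))) (1 - α • (s * c * s)) := by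
  simp only [SemiconjBy, mul_sub, sub_mul, mul_one, one_mul, mul_smul_comm, smul_mul_assoc,
    mul_assoc]

lemma sum_pow_one_sub_smul_eq_cfc {A : Type*} [Ring A] [StarRing A] [Algebra ℝ A]
    [TopologicalSpace A] [ContinuousFunctionalCalculus ℝ A IsSelfAdjoint] {a : A}
    (ha : IsSelfAdjoint a) (α : ℝ) (s : Finset ℕ) :
    ∑ i ∈ s, (1 - α • a) ^ i = cfc (fun x => ∑ i ∈ s, (1 - α * x) ^ i) a := by
  rw [← Finset.sum_fn, cfc_sum (fun i x => (1 - α * x) ^ i) a s]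
  refine Finset.sum_congr rfl fun i _ => ?_
  rw [cfc_pow (fun x => 1 - α * x) i a, cfc_sub (fun _ => 1) (α * ·) a, cfc_const_one ℝ a,
    cfc_const_mul_id α a]

namespace Matrix

lemma dotProduct_transpose_mul_mul_mulVec {m n R : Type*} [Fintype m] [Fintype n]
    [CommSemiring R] (A : Matrix m n R) (C : Matrix m m R) (x : n → R) :
    x ⬝ᵥ (Aᵀ * C * A) *ᵥ x = (A *ᵥ x) ⬝ᵥ C *ᵥ (A *ᵥ x) := by
  rw [← mulVec_mulVec, ← mulVec_mulVec, dotProduct_mulVec, vecMul_transpose]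

lemma dotProduct_transpose_mul_mulVec {m n R : Type*} [Fintype m] [Fintype n]
    [CommSemiring R] (A : Matrix m n R) (x : n → R) :
    x ⬝ᵥ (Aᵀ * A) *ᵥ x = (A *ᵥ x) ⬝ᵥ (A *ᵥ x) := by
  rw [← mulVec_mulVec, dotProduct_mulVec, vecMul_transpose]

variable {ι : Type*} [Fintype ι] [DecidableEq ι]

lemma continuousOn_spectrum_real (f : ℝ → ℝ) (A : Matrix ι ι ℝ) :
    ContinuousOn f (spectrum ℝ A) :=
  A.finite_real_spectrum.continuousOn f

lemma dotProduct_cfc_mulVec_le {A : Matrix ι ι ℝ} {f g : ℝ → ℝ} {c : ℝ}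
    (hfg : ∀ x ∈ spectrum ℝ A, f x ≤ c * g x) (u : ι → ℝ) :
    u ⬝ᵥ cfc f A *ᵥ u ≤ c * (u ⬝ᵥ cfc g A *ᵥ u) := by
  have hle : cfc f A ≤ c • cfc g A := by
    rw [← cfc_const_mul c g A (continuousOn_spectrum_real g A)]
    exact cfc_mono hfg (continuousOn_spectrum_real f A) (continuousOn_spectrum_real _ A)
  have := (le_iff.mp hle).dotProduct_mulVec_nonneg u
  rw [star_trivial, sub_mulVec, dotProduct_sub, smul_mulVec, dotProduct_smul, smul_eq_mul] at this
  linarith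

lemma cfc_mulVec_dotProduct_cfc_mulVec {A : Matrix ι ι ℝ} (hA : A.IsHermitian) (f : ℝ → ℝ)
    (u : ι → ℝ) : (cfc f A *ᵥ u) ⬝ᵥ (cfc f A *ᵥ u) = u ⬝ᵥ cfc (fun x => f x ^ 2) A *ᵥ u := by
  have hsymm : (cfc f A)ᵀ = cfc f A :=
    (isHermitian_iff_isSymm.mp (cfc_predicate f A).isHermitian).eq
  rw [cfc_pow f 2 A (continuousOn_spectrum_real f A), sq, ← dotProduct_transpose_mul_mulVec,
    hsymm]

lemma IsHermitian.le_iSup_eigenvalues_of_mem_spectrum {A : Matrix ι ι ℝ} (hA : A.IsHermitian)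
    {x : ℝ} (hx : x ∈ spectrum ℝ A) : x ≤ ⨆ i, hA.eigenvalues i := by
  obtain ⟨i, rfl⟩ := hA.spectrum_real_eq_range_eigenvalues ▸ hx
  exact le_ciSup (Set.finite_range _).bddAbove i

lemma IsHermitian.inv_eq_cfc {A : Matrix ι ι ℝ} (hA : A.IsHermitian) (hu : IsUnit A) :
    A⁻¹ = cfc (fun x : ℝ => x⁻¹) A := by
  rw [nonsing_inv_eq_ringInverse]
  exact (cfc_ringInverse_id (R := ℝ) (a := A) hu hA).symm

namespace PosSemidef

lemma sqrt_eq_cfcSqrt {A : Matrix ι ι ℝ} (hA : A.PosSemidef) : hA.sqrt = CFC.sqrt A := by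
  rw [CFC.sqrt_eq_real_sqrt A hA.nonneg, cfcₙ_eq_cfc, hA.1.cfc_eq, IsHermitian.cfc,
    Unitary.conjStarAlgAut_apply]
  rfl

lemma sqrt_mul_sqrt {A : Matrix ι ι ℝ} (hA : A.PosSemidef) : hA.sqrt * hA.sqrt = A := by
  rw [hA.sqrt_eq_cfcSqrt, CFC.sqrt_mul_sqrt_self A hA.nonneg]

lemma transpose_sqrt {A : Matrix ι ι ℝ} (hA : A.PosSemidef) : hA.sqrtᵀ = hA.sqrt := by
  rw [hA.sqrt_eq_cfcSqrt]
  exact (isHermitian_iff_isSymm.mp (CFC.sqrt_nonneg A).isSelfAdjoint.isHermitian).eq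

end PosSemidef

lemma PosDef.isUnit_sqrt {A : Matrix ι ι ℝ} (hA : A.PosDef) : IsUnit hA.posSemidef.sqrt := by
  rw [hA.posSemidef.sqrt_eq_cfcSqrt, CFC.isUnit_sqrt_iff A hA.posSemidef.nonneg]
  exact hA.isUnit

section Conjugation

variable {S B : Matrix ι ι ℝ}

lemma inv_mul_inv_mul_eq (hB : IsUnit B) : (S * B⁻¹ * S)⁻¹ = S⁻¹ * B * S⁻¹ := by
  rw [Matrix.mul_inv_rev, Matrix.mul_inv_rev,
    nonsing_inv_nonsing_inv B ((isUnit_iff_isUnit_det B).mp hB), Matrix.mul_assoc]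

lemma inv_mul_inv_mul_mul_self (hS : IsUnit S) (hB : IsUnit B) :
    (S * B⁻¹ * S)⁻¹ * S = S⁻¹ * B := by
  rw [inv_mul_inv_mul_eq hB, Matrix.mul_assoc,
    nonsing_inv_mul S ((isUnit_iff_isUnit_det S).mp hS), Matrix.mul_one]

lemma mul_inv_mul_inv_mul_mul (hS : IsUnit S) (hB : IsUnit B) :
    S * (S * B⁻¹ * S)⁻¹ * S = B := by
  have hS' := (isUnit_iff_isUnit_det S).mp hS
  rw [inv_mul_inv_mul_eq hB]
  simp only [← Matrix.mul_assoc, mul_nonsing_inv S hS', Matrix.one_mul]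
  rw [Matrix.mul_assoc, nonsing_inv_mul S hS', Matrix.mul_one]

lemma posDef_mul_inv_mul (hS : IsUnit S) (hSt : Sᵀ = S) (hB : B.PosDef) :
    (S * B⁻¹ * S).PosDef := by
  have := hB.inv.conjTranspose_mul_mul_same (mulVec_injective_iff_isUnit (A := S) |>.mpr hS)
  rwa [conjTranspose_eq_transpose_of_trivial, hSt] at this

lemma mulVec_average_iterates_eq_cfc {H : Matrix ι ι ℝ} (hSS : S * S = H)
    (hT : (S * B⁻¹ * S).IsHermitian) (α c : ℝ) (s : Finset ℕ) (Δ : ι → ℝ) :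
    S *ᵥ (c • ((∑ i ∈ s, (1 - α • (B⁻¹ * H)) ^ i) *ᵥ Δ))
      = cfc (fun x => c * ∑ i ∈ s, (1 - α * x) ^ i) (S * B⁻¹ * S) *ᵥ (S *ᵥ Δ) := by
  rw [← hSS, mulVec_smul, mulVec_mulVec, ((semiconjBy_one_sub_smul S B⁻¹ α).sum_pow_right s).eq,
    ← mulVec_mulVec, sum_pow_one_sub_smul_eq_cfc (a := S * B⁻¹ * S) hT,
    cfc_const_mul c _ _ (continuousOn_spectrum_real _ _), smul_mulVec]

end Conjugation

lemma dotProduct_cfc_sq_average_geom_sum_le {T : Matrix ι ι ℝ} (hT : T.IsHermitian) {α : ℝ}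
    (hspec : ∀ x ∈ spectrum ℝ T, 0 < α * x ∧ α * x ≤ 1) (k : ℕ) (u : ι → ℝ) :
    let F := fun x => 1 / ((k : ℝ) + 1) * ∑ i ∈ range (k + 1), (1 - α * x) ^ i
    u ⬝ᵥ cfc (fun x => F x ^ 2) T *ᵥ u
        ≤ (((k : ℝ) + 1) ^ 2 * α ^ 2)⁻¹ * (u ⬝ᵥ cfc (fun x : ℝ => x⁻¹ ^ 2) T *ᵥ u) ∧
      u ⬝ᵥ cfc (fun x => F x ^ 2) T *ᵥ u
        ≤ (((k : ℝ) + 1) * α)⁻¹ * (u ⬝ᵥ cfc (fun x : ℝ => x⁻¹) T *ᵥ u) ∧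
      u ⬝ᵥ cfc (fun x => F x ^ 2) T *ᵥ u ≤ u ⬝ᵥ u := by
  intro F
  have hF x (hx : x ∈ spectrum ℝ T) := sq_average_geom_sum_le k (hspec x hx).1 (hspec x hx).2
  refine ⟨dotProduct_cfc_mulVec_le (fun x hx => (hF x hx).1.trans_eq ?_) u,
    dotProduct_cfc_mulVec_le (fun x hx => (hF x hx).2.1.trans_eq ?_) u, ?_⟩
  · simp only [mul_inv, mul_pow, inv_pow]; ring
  · simp only [mul_inv]; ring
  · have := dotProduct_cfc_mulVec_le (g := fun _ => 1) (c := 1)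
      (fun x hx => (hF x hx).2.2.trans_eq (one_mul (1 : ℝ)).symm) u
    rwa [cfc_const_one ℝ T, one_mulVec, one_mul] at this

end Matrix

theorem averaged_mean_error_bound_general {n : ℕ}
    (H B : Matrix (Fin n) (Fin n) ℝ)
    (θ0 θs : Fin n → ℝ) (α : ℝ) (hα : 0 < α)
    (hH : H.PosDef) (hB : B.PosDef)
    (hSym : (hH.posSemidef.sqrt * B⁻¹ * hH.posSemidef.sqrt).IsHermitian)
    (hlr : 2 * α * (⨆ i, hSym.eigenvalues i) < 1)
    (k : ℕ) :
    let Δ0 : Fin n → ℝ := θ0 - θs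
    let M : Matrix (Fin n) (Fin n) ℝ := 1 - α • (B⁻¹ * H)
    let ebar : Fin n → ℝ :=
      (1 / ((k : ℝ) + 1)) • (∑ i ∈ Finset.range (k + 1), M ^ i).mulVec Δ0
    let h0 : ℝ := (1 / 2) * (Δ0 ⬝ᵥ H.mulVec Δ0)
    let v1 : Fin n → ℝ := (hH.posSemidef.sqrt)⁻¹.mulVec (B.mulVec Δ0)
    let v2 : Fin n → ℝ := hB.posSemidef.sqrt.mulVec Δ0
    (1 / 2) * (ebar ⬝ᵥ H.mulVec ebar)
      ≤ min (min ((1 / (2 * ((k : ℝ) + 1) ^ 2 * α ^ 2)) * (v1 ⬝ᵥ v1))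
              ((1 / (2 * ((k : ℝ) + 1) * α)) * (v2 ⬝ᵥ v2)))
          h0 := by
  intro Δ0 M ebar h0 v1 v2
  set S := hH.posSemidef.sqrt
  set T := S * B⁻¹ * S
  set u := S *ᵥ Δ0
  have hSS : S * S = H := hH.posSemidef.sqrt_mul_sqrt
  have hSt : Sᵀ = S := hH.posSemidef.transpose_sqrt
  have hSu : IsUnit S := hH.isUnit_sqrt
  have hT : T.PosDef := posDef_mul_inv_mul hSu hSt hB
  have hspec : ∀ x ∈ spectrum ℝ T, 0 < α * x ∧ α * x ≤ 1 := fun x hx =>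
    ⟨mul_pos hα ((isStrictlyPositive_iff_posDef.mpr hT).spectrum_pos hx),
      by nlinarith [hSym.le_iSup_eigenvalues_of_mem_spectrum hx]⟩
  have hH_eq (x : Fin n → ℝ) : x ⬝ᵥ H *ᵥ x = (S *ᵥ x) ⬝ᵥ (S *ᵥ x) := by
    rw [← dotProduct_transpose_mul_mulVec, hSt, hSS]
  have hebar : ebar ⬝ᵥ H *ᵥ ebar = u ⬝ᵥ cfc (fun x =>
      (1 / ((k : ℝ) + 1) * ∑ i ∈ range (k + 1), (1 - α * x) ^ i) ^ 2) T *ᵥ u := by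
    rw [hH_eq, mulVec_average_iterates_eq_cfc hSS hT.1, cfc_mulVec_dotProduct_cfc_mulVec hT.1]
  have hv1 : v1 ⬝ᵥ v1 = u ⬝ᵥ cfc (fun x : ℝ => x⁻¹ ^ 2) T *ᵥ u := by
    rw [← cfc_mulVec_dotProduct_cfc_mulVec hT.1, ← hT.1.inv_eq_cfc hT.isUnit, mulVec_mulVec,
      inv_mul_inv_mul_mul_self hSu hB.isUnit, ← mulVec_mulVec]
  have hv2 : v2 ⬝ᵥ v2 = u ⬝ᵥ cfc (fun x : ℝ => x⁻¹) T *ᵥ u := by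
    rw [← dotProduct_transpose_mul_mulVec, hB.posSemidef.transpose_sqrt,
      hB.posSemidef.sqrt_mul_sqrt, ← hT.1.inv_eq_cfc hT.isUnit,
      ← dotProduct_transpose_mul_mul_mulVec, hSt, mul_inv_mul_inv_mul_mul hSu hB.isUnit]
  have hh0 : h0 = 1 / 2 * (u ⬝ᵥ u) := congrArg (1 / 2 * ·) (hH_eq Δ0)
  obtain ⟨h1, h2, h3⟩ := dotProduct_cfc_sq_average_geom_sum_le hT.1 hspec k u
  beta_reduce at h1 h2 h3
  rw [hebar, hv1, hv2, hh0]
  -- `ring` cannot split inverses of the sum `k + 1`, so make it an atom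
  generalize ((k : ℝ) + 1) = K at h1 h2 h3 ⊢
  exact le_min (le_min (by linear_combination h1 / 2) (by linear_combination h2 / 2))
    (by linear_combination h3 / 2)

/-- For `ē_k = (1/(k+1)) Σ_{i=0}^k M^i Δ₀` with `M = I − αB⁻¹H`,
`½ ē_kᵀ H ē_k ≤ min{ ‖H^{−1/2}BΔ₀‖²/(2(k+1)²α²), ‖B^{1/2}Δ₀‖²/(2(k+1)α), h(θ₀) }`. -/
theorem averaged_mean_error_bound {n : ℕ} (hn : 0 < n)
    (H B : Matrix (Fin n) (Fin n) ℝ)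
    (θ0 θs : Fin n → ℝ) (α : ℝ) (hα : 0 < α)
    (hH : H.PosDef) (hB : B.PosDef)
    (hSym : (hH.posSemidef.sqrt * B⁻¹ * hH.posSemidef.sqrt).IsHermitian)
    (hlr : 2 * α * (⨆ i, hSym.eigenvalues i) < 1)
    (k : ℕ) :
    let Δ0 : Fin n → ℝ := θ0 - θs
    let M : Matrix (Fin n) (Fin n) ℝ := 1 - α • (B⁻¹ * H)
    let ebar : Fin n → ℝ :=
      (1 / ((k : ℝ) + 1)) • (∑ i ∈ Finset.range (k + 1), M ^ i).mulVec Δ0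
    let h0 : ℝ := (1 / 2) * (Δ0 ⬝ᵥ H.mulVec Δ0)
    let v1 : Fin n → ℝ := (hH.posSemidef.sqrt)⁻¹.mulVec (B.mulVec Δ0)
    let v2 : Fin n → ℝ := hB.posSemidef.sqrt.mulVec Δ0
    (1 / 2) * (ebar ⬝ᵥ H.mulVec ebar)
      ≤ min (min ((1 / (2 * ((k : ℝ) + 1) ^ 2 * α ^ 2)) * (v1 ⬝ᵥ v1))
              ((1 / (2 * ((k : ℝ) + 1) * α)) * (v2 ⬝ᵥ v2)))
          h0 :=
  averaged_mean_error_bound_general H B θ0 θs α hα hH hB hSym hlr k
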